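/- arXiv:1810.09009 — 4 statements merged into one kernel-verified Lean document; each statement's English description precedes it below -/
import Mathlib

section
/- Assume V ∈ Γ(ℝᵐ) is sublinear (i.e., proper lsc convex and positively homogeneous). Then the restriction of D to the convex set S_col⁻ is a convex function; moreover, D is differentiable at every σ ∈ S₀ ∩ int(dom V*) with ∇D(σ) = q(x(σ)). -/
/-!
For sublinear `V`, the conjugate `V*` vanishes on its domain `{σ | ⟨y, σ⟩ ≤ V y for y ∈ dom V}`
(`V*` is the indicator of `∂V(0)`), so on `S_col` the dual function is `D σ = Ξ(x, σ)` with
`Ξ(x, σ) = q₀(x) + ⟨q(x), σ⟩` affine in `σ`, for any solution `x` of `A(σ) x = b(σ)`.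

On `S_col⁻` the quadratic `Ξ(·, σ)` is concave and such an `x` is a critical point, hence a
maximiser: `D` is a pointwise maximum of affine functions and therefore convex. The set `S_col⁻`
itself is convex because the kernel of a convex combination of negative semidefinite matrices is
the intersection of their kernels, so by the Fredholm alternative its range contains both ranges.

Near `σ ∈ S₀ ∩ int(dom V*)` we have `D τ = Ξ(x(τ), τ)`, and since `x(τ)` is a critical point of
`Ξ(·, τ)`, `D τ - D σ - ⟨q(x(σ)), τ - σ⟩ = -½ ⟨x(τ) - x(σ), A(τ)(x(τ) - x(σ))⟩`. Here
`x(τ) - x(σ) → 0` and `A(τ)(x(τ) - x(σ)) = b(τ) - A(τ) x(σ)` is affine in `τ` and vanishes at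
`σ`, so the remainder is `o(τ - σ)`.
-/

open Matrix Set

noncomputable section

/-- The quadratic function `x ↦ ½⟨x, A x⟩ − ⟨b, x⟩ + c`. -/
def qf {n : ℕ} (A : Matrix (Fin n) (Fin n) ℝ) (b : Fin n → ℝ) (c : ℝ) (x : Fin n → ℝ) : ℝ :=
  (1 / 2 : ℝ) * (x ⬝ᵥ A.mulVec x) - b ⬝ᵥ x + c

/-- `A(σ) = A₀ + Σ σ_k A_k`. -/
def Amat {n m : ℕ} (A0 : Matrix (Fin n) (Fin n) ℝ) (A : Fin m → Matrix (Fin n) (Fin n) ℝ)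
    (σ : Fin m → ℝ) : Matrix (Fin n) (Fin n) ℝ :=
  A0 + ∑ k, σ k • A k

/-- `b(σ) = b₀ + Σ σ_k b_k`. -/
def bvec {n m : ℕ} (b0 : Fin n → ℝ) (b : Fin m → Fin n → ℝ) (σ : Fin m → ℝ) : Fin n → ℝ :=
  b0 + ∑ k, σ k • b k

/-- `q(x) = (q₁(x), …, q_m(x))`. -/
def qvec {n m : ℕ} (A : Fin m → Matrix (Fin n) (Fin n) ℝ) (b : Fin m → Fin n → ℝ)
    (c : Fin m → ℝ) (x : Fin n → ℝ) : Fin m → ℝ :=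
  fun i => qf (A i) (b i) (c i) x

/-- Subdifferential of an (extended-real-valued) convex function represented by its
finite part `V` and its effective domain `dV`; it is empty outside `dV`. -/
def subdiff {m : ℕ} (V : (Fin m → ℝ) → ℝ) (dV : Set (Fin m → ℝ)) (y : Fin m → ℝ) :
    Set (Fin m → ℝ) :=
  {σ | y ∈ dV ∧ ∀ y' ∈ dV, (y' - y) ⬝ᵥ σ ≤ V y' - V y}

/-- `V ∈ Γ(ℝᵐ)`: proper, convex and lower semicontinuous (closed epigraph), where the
extended-real-valued function is represented by its finite part `V` on its domain `dV`. -/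
def properLscConvex {m : ℕ} (V : (Fin m → ℝ) → ℝ) (dV : Set (Fin m → ℝ)) : Prop :=
  dV.Nonempty ∧ ConvexOn ℝ dV V ∧
    IsClosed {p : (Fin m → ℝ) × ℝ | p.1 ∈ dV ∧ V p.1 ≤ p.2}

/-- `(Vs, dVs)` is the Fenchel conjugate of `(V, dV)`:
`dVs` is the set where the supremum is finite and `Vs` its value there. -/
def isConjugate {m : ℕ} (V : (Fin m → ℝ) → ℝ) (dV : Set (Fin m → ℝ))
    (Vs : (Fin m → ℝ) → ℝ) (dVs : Set (Fin m → ℝ)) : Prop :=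
  dVs = {σ | BddAbove ((fun y => y ⬝ᵥ σ - V y) '' dV)} ∧
    ∀ σ ∈ dVs, Vs σ = sSup ((fun y => y ⬝ᵥ σ - V y) '' dV)

/-- The continuous linear functional `v ↦ ⟨g, v⟩`. -/
def dotCLM {k : ℕ} (g : Fin k → ℝ) : (Fin k → ℝ) →L[ℝ] ℝ :=
  LinearMap.toContinuousLinearMap
    { toFun := fun v => g ⬝ᵥ v
      map_add' := fun u v => by simp [dotProduct_add]
      map_smul' := fun t v => by simp [dotProduct_smul, smul_eq_mul] }

/-- The continuous linear map `v ↦ M v`. -/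
def matCLM {k l : ℕ} (M : Matrix (Fin l) (Fin k) ℝ) : (Fin k → ℝ) →L[ℝ] (Fin l → ℝ) :=
  LinearMap.toContinuousLinearMap M.mulVecLin

open Filter Topology Asymptotics

theorem Filter.Tendsto.isLittleO_dotProduct {α ι F : Type*} [Fintype ι] [SeminormedAddCommGroup F]
    {l : Filter α} {u v : α → ι → ℝ} {g : α → F} (hu : Tendsto u l (𝓝 0)) (hv : v =O[l] g) :
    (fun a => u a ⬝ᵥ v a) =o[l] g := by
  refine IsLittleO.fun_sum fun i _ => ?_
  have hui : (fun a => u a i) =o[l] (fun _ => (1 : ℝ)) :=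
    (isLittleO_one_iff ℝ).2 (((continuous_apply i).tendsto 0).comp hu)
  have hvi : (fun a => v a i) =O[l] g :=
    ((ContinuousLinearMap.proj (R := ℝ) (φ := fun _ : ι => ℝ) i).isBigO_comp v l).trans hv
  simpa using hui.mul_isBigO hvi.norm_right

theorem convexOn_of_eq_max_affine {E ι : Type*} [AddCommGroup E] [Module ℝ E] {s : Set E}
    (hs : Convex ℝ s) {f : E → ℝ} (α : ι → ℝ) (β : ι → E →ₗ[ℝ] ℝ)
    (hle : ∀ σ ∈ s, ∀ i, α i + β i σ ≤ f σ) (hattain : ∀ σ ∈ s, ∃ i, f σ = α i + β i σ) :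
    ConvexOn ℝ s f := by
  refine ⟨hs, fun σ hσ τ hτ a b ha hb hab => ?_⟩
  obtain ⟨i, hi⟩ := hattain _ (hs hσ hτ ha hb hab)
  calc f (a • σ + b • τ) = a * (α i + β i σ) + b * (α i + β i τ) := by
        rw [hi, map_add, map_smul, map_smul, smul_eq_mul, smul_eq_mul]
        linear_combination α i * hab.symm
    _ ≤ a • f σ + b • f τ := by
        simp only [smul_eq_mul]
        gcongr
        exacts [hle σ hσ i, hle τ hτ i]

section Matrix

variable {ι : Type*} [Fintype ι]

theorem Matrix.IsHermitian.mem_range_mulVec_iff [DecidableEq ι] {M : Matrix ι ι ℝ}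
    (hM : M.IsHermitian) {v : ι → ℝ} : v ∈ range M.mulVec ↔ ∀ u, M *ᵥ u = 0 → v ⬝ᵥ u = 0 := by
  have hrange : LinearMap.range M.toEuclideanLin = (LinearMap.ker M.toEuclideanLin)ᗮ := by
    rw [← (isSymmetric_toEuclideanLin_iff.2 hM).orthogonal_range, Submodule.orthogonal_orthogonal]
  have hmem : v ∈ range M.mulVec ↔ WithLp.toLp 2 v ∈ LinearMap.range M.toEuclideanLin := by
    constructor
    · rintro ⟨x, rfl⟩
      exact ⟨WithLp.toLp 2 x, rfl⟩
    · rintro ⟨x, hx⟩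
      exact ⟨x.ofLp, congrArg WithLp.ofLp hx⟩
  rw [hmem, hrange, Submodule.mem_orthogonal']
  constructor
  · intro h u hu
    simpa [EuclideanSpace.inner_eq_star_dotProduct, dotProduct_comm] using
      h (WithLp.toLp 2 u) (congrArg (WithLp.toLp 2) hu)
  · intro h u hu
    simpa [EuclideanSpace.inner_eq_star_dotProduct, dotProduct_comm] using
      h u.ofLp (congrArg WithLp.ofLp (LinearMap.mem_ker.1 hu))

theorem Matrix.range_mulVec_neg (M : Matrix ι ι ℝ) : range (-M).mulVec = range M.mulVec := by
  ext v
  constructor <;> rintro ⟨x, rfl⟩ <;> exact ⟨-x, by simp [neg_mulVec, mulVec_neg]⟩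

theorem Matrix.PosSemidef.dotProduct_eq_zero_of_mem_range [DecidableEq ι] {M : Matrix ι ι ℝ}
    (hM : M.PosSemidef) {u v : ι → ℝ} (hv : v ∈ range M.mulVec) (hu : u ⬝ᵥ M *ᵥ u = 0) :
    v ⬝ᵥ u = 0 :=
  hM.isHermitian.mem_range_mulVec_iff.1 hv u ((hM.dotProduct_mulVec_zero_iff u).1 hu)

theorem Matrix.PosSemidef.smul_add_smul_mem_range [DecidableEq ι] {M N : Matrix ι ι ℝ}
    (hM : M.PosSemidef) (hN : N.PosSemidef) {a b : ℝ} (ha : 0 ≤ a) (hb : 0 ≤ b) {v w : ι → ℝ}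
    (hv : v ∈ range M.mulVec) (hw : w ∈ range N.mulVec) :
    a • v + b • w ∈ range (a • M + b • N).mulVec := by
  have haM := hM.smul ha
  have hbN := hN.smul hb
  rw [(haM.add hbN).isHermitian.mem_range_mulVec_iff]
  intro u hu
  have hsum : u ⬝ᵥ (a • M) *ᵥ u + u ⬝ᵥ (b • N) *ᵥ u = 0 := by
    simpa [add_mulVec, dotProduct_add] using congrArg (u ⬝ᵥ ·) hu
  have haMu : 0 ≤ u ⬝ᵥ (a • M) *ᵥ u := haM.dotProduct_mulVec_nonneg u
  have hbNu : 0 ≤ u ⬝ᵥ (b • N) *ᵥ u := hbN.dotProduct_mulVec_nonneg u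
  have hav : a • v ∈ range (a • M).mulVec := by
    obtain ⟨x, rfl⟩ := hv
    exact ⟨x, smul_mulVec a M x⟩
  have hbw : b • w ∈ range (b • N).mulVec := by
    obtain ⟨x, rfl⟩ := hw
    exact ⟨x, smul_mulVec b N x⟩
  rw [add_dotProduct, haM.dotProduct_eq_zero_of_mem_range hav (by linarith),
    hbN.dotProduct_eq_zero_of_mem_range hbw (by linarith), add_zero]

end Matrix

section Conjugate

variable {E : Type*} [AddCommGroup E] [Module ℝ E] [TopologicalSpace E] [ContinuousSMul ℝ E]

theorem zero_mem_and_eq_zero_of_posHomogeneous {V : E → ℝ} {dV : Set E} (hne : dV.Nonempty)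
    (hclosed : IsClosed {p : E × ℝ | p.1 ∈ dV ∧ V p.1 ≤ p.2})
    (hhom : ∀ t : ℝ, 0 < t → ∀ y ∈ dV, t • y ∈ dV ∧ V (t • y) = t * V y) :
    0 ∈ dV ∧ V 0 = 0 := by
  obtain ⟨y, hy⟩ := hne
  have hlim : Tendsto (fun t : ℝ => (t • y, t * V y)) (𝓝[>] 0) (𝓝 (0, 0)) := by
    have hcont : Continuous (fun t : ℝ => (t • y, t * V y)) := by fun_prop
    simpa using (hcont.tendsto 0).mono_left nhdsWithin_le_nhds
  have hepi : ∀ᶠ t in 𝓝[>] (0 : ℝ), (t • y, t * V y) ∈ {p : E × ℝ | p.1 ∈ dV ∧ V p.1 ≤ p.2} :=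
    eventually_nhdsWithin_of_forall fun t ht => ⟨(hhom t ht y hy).1, (hhom t ht y hy).2.le⟩
  obtain ⟨h0, hV0_le⟩ := hclosed.mem_of_tendsto hlim hepi
  have hV0_double := (hhom 2 two_pos 0 h0).2
  rw [smul_zero] at hV0_double
  exact ⟨h0, by linarith⟩

variable {m : ℕ} {V : (Fin m → ℝ) → ℝ} {dV : Set (Fin m → ℝ)}

theorem bddAbove_image_dotProduct_sub_iff
    (hhom : ∀ t : ℝ, 0 < t → ∀ y ∈ dV, t • y ∈ dV ∧ V (t • y) = t * V y) (σ : Fin m → ℝ) :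
    BddAbove ((fun y => y ⬝ᵥ σ - V y) '' dV) ↔ ∀ y ∈ dV, y ⬝ᵥ σ ≤ V y := by
  constructor
  · rintro ⟨M, hM⟩ y hy
    by_contra! hlt
    have hδ : 0 < y ⬝ᵥ σ - V y := sub_pos.2 hlt
    set t := (|M| + 1) / (y ⬝ᵥ σ - V y)
    have ht : 0 < t := by positivity
    have hle := hM ⟨t • y, (hhom t ht y hy).1, rfl⟩
    have htδ : t * (y ⬝ᵥ σ - V y) = |M| + 1 := div_mul_cancel₀ _ hδ.ne'
    simp only [(hhom t ht y hy).2, smul_dotProduct, smul_eq_mul] at hle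
    linarith [le_abs_self M]
  · intro h
    exact ⟨0, by rintro _ ⟨y, hy, rfl⟩; exact sub_nonpos.2 (h y hy)⟩

theorem sSup_image_dotProduct_sub_eq_zero (h0 : 0 ∈ dV) (hV0 : V 0 = 0) {σ : Fin m → ℝ}
    (hσ : ∀ y ∈ dV, y ⬝ᵥ σ ≤ V y) : sSup ((fun y => y ⬝ᵥ σ - V y) '' dV) = 0 :=
  IsGreatest.csSup_eq ⟨⟨0, h0, by simp [hV0]⟩, by
    rintro _ ⟨y, hy, rfl⟩
    exact sub_nonpos.2 (hσ y hy)⟩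

theorem convex_setOf_forall_dotProduct_le :
    Convex ℝ {σ : Fin m → ℝ | ∀ y ∈ dV, y ⬝ᵥ σ ≤ V y} := by
  intro σ hσ τ hτ s t hs ht hst y hy
  calc y ⬝ᵥ (s • σ + t • τ) = s * (y ⬝ᵥ σ) + t * (y ⬝ᵥ τ) := by
        rw [dotProduct_add, dotProduct_smul, dotProduct_smul, smul_eq_mul, smul_eq_mul]
    _ ≤ s * V y + t * V y := by
        gcongr
        exacts [hσ y hy, hτ y hy]
    _ = V y := by rw [← add_mul, hst, one_mul]

end Conjugate

section Dual

variable {n m : ℕ}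

theorem add_sum_smul_add_smul {κ M : Type*} [Fintype κ] [AddCommGroup M] [Module ℝ M] (v₀ : M)
    (v : κ → M) (σ τ : κ → ℝ) {a b : ℝ} (hab : a + b = 1) :
    v₀ + ∑ k, (a • σ + b • τ) k • v k =
      a • (v₀ + ∑ k, σ k • v k) + b • (v₀ + ∑ k, τ k • v k) := by
  simp only [Pi.add_apply, Pi.smul_apply, smul_eq_mul, add_smul, mul_smul,
    Finset.sum_add_distrib, ← Finset.smul_sum, smul_add]
  linear_combination (norm := module) hab.symm • v₀

theorem Amat_mulVec (A0 : Matrix (Fin n) (Fin n) ℝ) (A : Fin m → Matrix (Fin n) (Fin n) ℝ)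
    (σ : Fin m → ℝ) (x : Fin n → ℝ) : Amat A0 A σ *ᵥ x = A0 *ᵥ x + ∑ k, σ k • (A k *ᵥ x) := by
  simp [Amat, add_mulVec, sum_mulVec, smul_mulVec]

theorem Amat_isSymm {A0 : Matrix (Fin n) (Fin n) ℝ} {A : Fin m → Matrix (Fin n) (Fin n) ℝ}
    (hA0 : A0.IsSymm) (hA : ∀ i, (A i).IsSymm) (σ : Fin m → ℝ) : (Amat A0 A σ).IsSymm :=
  IsSymm.ext fun i j => by simp [Amat, Matrix.sum_apply, hA0.apply, (hA _).apply]

theorem continuous_Amat (A0 : Matrix (Fin n) (Fin n) ℝ) (A : Fin m → Matrix (Fin n) (Fin n) ℝ) :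
    Continuous (Amat A0 A) := by
  unfold Amat
  fun_prop

theorem continuous_bvec (b0 : Fin n → ℝ) (b : Fin m → Fin n → ℝ) : Continuous (bvec b0 b) := by
  unfold bvec
  fun_prop

theorem qf_sub_qf_of_mulVec_eq {M : Matrix (Fin n) (Fin n) ℝ} (hM : M.IsSymm) {β x y : Fin n → ℝ}
    (γ : ℝ) (hy : M *ᵥ y = β) : qf M β γ y - qf M β γ x = -(1 / 2 * ((y - x) ⬝ᵥ M *ᵥ (y - x))) := by
  have hyx : y ⬝ᵥ M *ᵥ x = x ⬝ᵥ β := by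
    rw [dotProduct_mulVec, ← mulVec_transpose, hM.eq, hy, dotProduct_comm]
  simp only [qf, mulVec_sub, dotProduct_sub, sub_dotProduct, hyx, hy, dotProduct_comm β y,
    dotProduct_comm β x]
  ring

/-- `q₀(x) + ⟨q(x), σ⟩`, which is `Ξ(x, σ)` once `V* = 0`. -/
def lagrangian (A0 : Matrix (Fin n) (Fin n) ℝ) (A : Fin m → Matrix (Fin n) (Fin n) ℝ)
    (b0 : Fin n → ℝ) (b : Fin m → Fin n → ℝ) (c : Fin m → ℝ) (σ : Fin m → ℝ) (x : Fin n → ℝ) :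
    ℝ :=
  qf A0 b0 0 x + qvec A b c x ⬝ᵥ σ

section Lagrangian

variable (A0 : Matrix (Fin n) (Fin n) ℝ) (A : Fin m → Matrix (Fin n) (Fin n) ℝ)
  (b0 : Fin n → ℝ) (b : Fin m → Fin n → ℝ) (c : Fin m → ℝ)

theorem lagrangian_eq_qf (σ : Fin m → ℝ) (x : Fin n → ℝ) :
    lagrangian A0 A b0 b c σ x = qf (Amat A0 A σ) (bvec b0 b σ) (c ⬝ᵥ σ) x := by
  have hq : qvec A b c x ⬝ᵥ σ = ∑ k, (1 / 2 * (x ⬝ᵥ A k *ᵥ x) - b k ⬝ᵥ x + c k) * σ k := rfl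
  have hc : c ⬝ᵥ σ = ∑ k, c k * σ k := rfl
  have hterm : ∀ k, (1 / 2 * (x ⬝ᵥ A k *ᵥ x) - b k ⬝ᵥ x + c k) * σ k =
      1 / 2 * (σ k * (x ⬝ᵥ A k *ᵥ x)) - σ k * (b k ⬝ᵥ x) + c k * σ k := fun k => by ring
  simp only [lagrangian, qf, hq, hc, hterm, Amat_mulVec, bvec, dotProduct_add, add_dotProduct,
    dotProduct_sum, sum_dotProduct, dotProduct_smul, smul_dotProduct, smul_eq_mul,
    Finset.sum_add_distrib, Finset.sum_sub_distrib, ← Finset.mul_sum]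
  ring

theorem lagrangian_sub_lagrangian_left (σ τ : Fin m → ℝ) (x : Fin n → ℝ) :
    lagrangian A0 A b0 b c τ x - lagrangian A0 A b0 b c σ x = qvec A b c x ⬝ᵥ (τ - σ) := by
  simp only [lagrangian, dotProduct_sub]
  ring

variable {A0 A b0 b c}

theorem lagrangian_sub_lagrangian_of_mulVec_eq (hA0 : A0.IsSymm) (hA : ∀ i, (A i).IsSymm)
    {σ : Fin m → ℝ} {x y : Fin n → ℝ} (hy : Amat A0 A σ *ᵥ y = bvec b0 b σ) :
    lagrangian A0 A b0 b c σ y - lagrangian A0 A b0 b c σ x =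
      -(1 / 2 * ((y - x) ⬝ᵥ Amat A0 A σ *ᵥ (y - x))) := by
  rw [lagrangian_eq_qf, lagrangian_eq_qf, qf_sub_qf_of_mulVec_eq (Amat_isSymm hA0 hA σ) _ hy]

theorem lagrangian_le_of_mulVec_eq (hA0 : A0.IsSymm) (hA : ∀ i, (A i).IsSymm)
    {σ : Fin m → ℝ} (hσ : (-(Amat A0 A σ)).PosSemidef) {y : Fin n → ℝ}
    (hy : Amat A0 A σ *ᵥ y = bvec b0 b σ) (x : Fin n → ℝ) :
    lagrangian A0 A b0 b c σ x ≤ lagrangian A0 A b0 b c σ y := by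
  have hneg := hσ.dotProduct_mulVec_nonneg (y - x)
  have := lagrangian_sub_lagrangian_of_mulVec_eq (c := c) (x := x) hA0 hA hy
  simp only [star_trivial, neg_mulVec, dotProduct_neg] at hneg
  linarith

end Lagrangian

section Solution

variable {A0 : Matrix (Fin n) (Fin n) ℝ} {A : Fin m → Matrix (Fin n) (Fin n) ℝ}
  {b0 : Fin n → ℝ} {b : Fin m → Fin n → ℝ} {c : Fin m → ℝ}

theorem convex_negSemidef_solvable {K : Set (Fin m → ℝ)} (hK : Convex ℝ K) :
    Convex ℝ {σ | σ ∈ K ∧ bvec b0 b σ ∈ range (Amat A0 A σ).mulVec ∧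
      (-(Amat A0 A σ)).PosSemidef} := by
  rintro σ ⟨hσK, hσb, hσA⟩ τ ⟨hτK, hτb, hτA⟩ s t hs ht hst
  have hAmat : -Amat A0 A (s • σ + t • τ) = s • -Amat A0 A σ + t • -Amat A0 A τ := by
    rw [Amat, add_sum_smul_add_smul A0 A σ τ hst, neg_add, smul_neg, smul_neg]
    rfl
  have hbvec : bvec b0 b (s • σ + t • τ) = s • bvec b0 b σ + t • bvec b0 b τ :=
    add_sum_smul_add_smul b0 b σ τ hst
  refine ⟨hK hσK hτK hs ht hst, ?_, ?_⟩
  · rw [hbvec, ← range_mulVec_neg, hAmat]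
    exact hσA.smul_add_smul_mem_range hτA hs ht (by rwa [range_mulVec_neg])
      (by rwa [range_mulVec_neg])
  · rw [hAmat]
    exact (hσA.smul hs).add (hτA.smul ht)

theorem eventually_Amat_mulVec_inv_mulVec {σ : Fin m → ℝ} (hσ : IsUnit (Amat A0 A σ).det) :
    ∀ᶠ τ in 𝓝 σ, Amat A0 A τ *ᵥ ((Amat A0 A τ)⁻¹ *ᵥ bvec b0 b τ) = bvec b0 b τ := by
  have hunit : ∀ᶠ τ in 𝓝 σ, IsUnit (Amat A0 A τ).det := by
    simp only [isUnit_iff_ne_zero] at hσ ⊢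
    exact (continuous_Amat A0 A).matrix_det.continuousAt.eventually_ne hσ
  filter_upwards [hunit] with τ hτ
  rw [mulVec_mulVec, mul_nonsing_inv _ hτ, one_mulVec]

theorem continuousAt_Amat_inv_mulVec {σ : Fin m → ℝ} (hσ : IsUnit (Amat A0 A σ).det) :
    ContinuousAt (fun τ => (Amat A0 A τ)⁻¹ *ᵥ bvec b0 b τ) σ := by
  have hinv : ContinuousAt (fun τ => (Amat A0 A τ)⁻¹) σ := by
    refine (continuousAt_matrix_inv _ ?_).comp (continuous_Amat A0 A).continuousAt
    rw [Ring.inverse_eq_inv']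
    exact continuousAt_inv₀ (isUnit_iff_ne_zero.1 hσ)
  exact (continuous_fst.matrix_mulVec continuous_snd).continuousAt.comp
    (hinv.prodMk (continuous_bvec b0 b).continuousAt)

theorem differentiable_bvec_sub_Amat_mulVec (x : Fin n → ℝ) :
    Differentiable ℝ (fun τ => bvec b0 b τ - Amat A0 A τ *ᵥ x) := by
  simp only [bvec, Amat_mulVec]
  fun_prop

theorem hasFDerivAt_lagrangian_inv_mulVec (hA0 : A0.IsSymm) (hA : ∀ i, (A i).IsSymm)
    {σ : Fin m → ℝ} (hσ : IsUnit (Amat A0 A σ).det) :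
    HasFDerivAt (fun τ => lagrangian A0 A b0 b c τ ((Amat A0 A τ)⁻¹ *ᵥ bvec b0 b τ))
      (dotCLM (qvec A b c ((Amat A0 A σ)⁻¹ *ᵥ bvec b0 b σ))) σ := by
  set x := fun τ => (Amat A0 A τ)⁻¹ *ᵥ bvec b0 b τ
  set r := fun τ => bvec b0 b τ - Amat A0 A τ *ᵥ x σ
  have hrσ : r σ = 0 :=
    sub_eq_zero.2 (eventually_Amat_mulVec_inv_mulVec hσ).self_of_nhds.symm
  have hrem : ∀ᶠ τ in 𝓝 σ, -(1 / 2) * ((x τ - x σ) ⬝ᵥ (r τ - r σ)) =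
      lagrangian A0 A b0 b c τ (x τ) - lagrangian A0 A b0 b c σ (x σ) -
        dotCLM (qvec A b c (x σ)) (τ - σ) := by
    filter_upwards [eventually_Amat_mulVec_inv_mulVec hσ] with τ hτ
    have hr : r τ - r σ = Amat A0 A τ *ᵥ (x τ - x σ) := by
      rw [hrσ, sub_zero, mulVec_sub, hτ]
    have hleft := lagrangian_sub_lagrangian_left A0 A b0 b c σ τ (x σ)
    have hright := lagrangian_sub_lagrangian_of_mulVec_eq (c := c) (x := x σ) hA0 hA hτ
    rw [hr]
    change _ = _ - _ - qvec A b c (x σ) ⬝ᵥ (τ - σ)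
    linarith
  have hx : Tendsto (fun τ => x τ - x σ) (𝓝 σ) (𝓝 0) := by
    simpa [x] using (continuousAt_Amat_inv_mulVec (b0 := b0) (b := b) hσ).tendsto.sub_const (x σ)
  rw [hasFDerivAt_iff_isLittleO]
  have hr : (fun τ => r τ - r σ) =O[𝓝 σ] (fun τ => τ - σ) :=
    (differentiable_bvec_sub_Amat_mulVec (x σ) σ).isBigO_sub
  exact ((hx.isLittleO_dotProduct hr).const_mul_left _).congr' hrem EventuallyEq.rfl

end Solution

end Dual

/-- If `V ∈ Γ(ℝᵐ)` is sublinear (proper lsc convex and positively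
homogeneous), then `D` restricted to `S_col⁻` is convex, and `D` is differentiable at every
`σ ∈ S₀ ∩ int(dom V*)` with `∇D(σ) = q(x(σ))`. -/
theorem statement1 {n m : ℕ}
    (A0 : Matrix (Fin n) (Fin n) ℝ) (A : Fin m → Matrix (Fin n) (Fin n) ℝ)
    (b0 : Fin n → ℝ) (b : Fin m → Fin n → ℝ) (c : Fin m → ℝ)
    (hA0 : A0.IsSymm) (hA : ∀ i, (A i).IsSymm)
    (V Vs : (Fin m → ℝ) → ℝ) (dV dVs : Set (Fin m → ℝ))
    (hV : properLscConvex V dV) (hconj : isConjugate V dV Vs dVs)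
    (hsublin : ∀ t : ℝ, 0 < t → ∀ y ∈ dV, t • y ∈ dV ∧ V (t • y) = t * V y)
    (D : (Fin m → ℝ) → ℝ)
    (hD : ∀ σ ∈ dVs, bvec b0 b σ ∈ Set.range (Amat A0 A σ).mulVec →
      ∀ x, Amat A0 A σ *ᵥ x = bvec b0 b σ →
        D σ = qf A0 b0 0 x + qvec A b c x ⬝ᵥ σ - Vs σ) :
    ConvexOn ℝ {σ | σ ∈ dVs ∧ bvec b0 b σ ∈ Set.range (Amat A0 A σ).mulVec ∧
        (-(Amat A0 A σ)).PosSemidef} D ∧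
    ∀ σ ∈ interior dVs, IsUnit (Amat A0 A σ).det →
      HasFDerivAt D (dotCLM (qvec A b c ((Amat A0 A σ)⁻¹ *ᵥ bvec b0 b σ))) σ := by
  obtain ⟨h0, hV0⟩ := zero_mem_and_eq_zero_of_posHomogeneous hV.1 hV.2.2 hsublin
  have hdom : dVs = {σ | ∀ y ∈ dV, y ⬝ᵥ σ ≤ V y} := by
    rw [hconj.1]
    ext σ
    exact bddAbove_image_dotProduct_sub_iff hsublin σ
  have hdom_convex : Convex ℝ dVs := hdom ▸ convex_setOf_forall_dotProduct_le
  have hDeq : ∀ σ ∈ dVs, ∀ x, Amat A0 A σ *ᵥ x = bvec b0 b σ →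
      D σ = lagrangian A0 A b0 b c σ x := by
    intro σ hσ x hx
    rw [hD σ hσ ⟨x, hx⟩ x hx, hconj.2 σ hσ,
      sSup_image_dotProduct_sub_eq_zero h0 hV0 (by rwa [hdom] at hσ), sub_zero, lagrangian]
  constructor
  · refine convexOn_of_eq_max_affine (convex_negSemidef_solvable hdom_convex)
      (fun x => qf A0 b0 0 x) (fun x => (dotCLM (qvec A b c x)).toLinearMap) ?_ ?_
    · rintro σ ⟨hσ, ⟨y, hy⟩, hneg⟩ x
      rw [hDeq σ hσ y hy]
      exact lagrangian_le_of_mulVec_eq hA0 hA hneg hy x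
    · rintro σ ⟨hσ, ⟨y, hy⟩, -⟩
      exact ⟨y, hDeq σ hσ y hy⟩
  · intro σ hσ hdet
    refine (hasFDerivAt_lagrangian_inv_mulVec hA0 hA hdet).congr_of_eventuallyEq ?_
    filter_upwards [mem_interior_iff_mem_nhds.1 hσ, eventually_Amat_mulVec_inv_mulVec hdet]
      with τ hτ hsol
    exact hDeq τ hτ _ hsol
end
end

section
/- Let (x̄,σ̄) ∈ ℝⁿ × dom V* satisfy A(σ̄)x̄ = b(σ̄) (i.e., ∇_xΞ(x̄,σ̄) = 0) and q(x̄) ∈ ∂V*(σ̄). Then x̄ ∈ dom f, σ̄ ∈ S_col, σ̄ ∈ ∂V(q(x̄)), and f(x̄) = Ξ(x̄,σ̄) = D(σ̄). -/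
/-!
Since `q(x̄) ∈ ∂V*(σ̄)`, the subgradient inequality of `V*` at `σ̄` shows that the concave function
`σ ↦ ⟨q(x̄), σ⟩ − V*(σ)` peaks at `σ̄`, so `V**(q(x̄)) = ⟨q(x̄), σ̄⟩ − V*(σ̄)`. By Fenchel–Moreau,
`V ≤ V**`: a point outside the closed convex epigraph of `V` is separated from it by a
hyperplane, which is either non-vertical (an affine minorant of `V`) or vertical, and then a large
multiple of it tilts any affine minorant until it passes above the point. Together with the
Fenchel–Young inequality this gives `V(q(x̄)) + V*(σ̄) = ⟨q(x̄), σ̄⟩`, i.e. `σ̄ ∈ ∂V(q(x̄))` and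
`f(x̄) = Ξ(x̄, σ̄)`; the equation `A(σ̄)x̄ = b(σ̄)` makes `x̄` admissible in the definition of `D(σ̄)`.
-/

open Matrix Set

noncomputable section

namespace isConjugate

variable {m : ℕ} {V Vs : (Fin m → ℝ) → ℝ} {dV dVs : Set (Fin m → ℝ)}

theorem dotProduct_sub_le (hconj : isConjugate V dV Vs dVs) {σ y : Fin m → ℝ}
    (hσ : σ ∈ dVs) (hy : y ∈ dV) : y ⬝ᵥ σ - V y ≤ Vs σ := by
  obtain ⟨hdom, hval⟩ := hconj
  rw [hval σ hσ]
  rw [hdom] at hσ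
  exact le_csSup hσ ⟨y, hy, rfl⟩

theorem mem_and_le_of_minorant (hconj : isConjugate V dV Vs dVs) (hne : dV.Nonempty)
    {σ : Fin m → ℝ} {β : ℝ} (hmin : ∀ y ∈ dV, y ⬝ᵥ σ - β ≤ V y) :
    σ ∈ dVs ∧ Vs σ ≤ β := by
  have hbound : ∀ z ∈ (fun y => y ⬝ᵥ σ - V y) '' dV, z ≤ β := by
    rintro _ ⟨y, hy, rfl⟩
    linarith [hmin y hy]
  have hσ : σ ∈ dVs := hconj.1 ▸ ⟨β, hbound⟩
  exact ⟨hσ, hconj.2 σ hσ ▸ csSup_le (hne.image _) hbound⟩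

end isConjugate

theorem exists_dotProduct_add_mul {m : ℕ} (f : (Fin m → ℝ) × ℝ →L[ℝ] ℝ) :
    ∃ (g : Fin m → ℝ) (r : ℝ), ∀ z s, f (z, s) = z ⬝ᵥ g + s * r := by
  let L : (Fin m → ℝ) →ₗ[ℝ] ℝ := (f.comp (ContinuousLinearMap.inl ℝ _ ℝ)).toLinearMap
  refine ⟨fun i => L fun j => if i = j then 1 else 0, f (0, 1), fun z s => ?_⟩
  have hsplit : ((z, s) : (Fin m → ℝ) × ℝ) = (z, 0) + s • ((0 : Fin m → ℝ), (1 : ℝ)) := by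
    simp
  rw [hsplit, map_add, map_smul, smul_eq_mul]
  exact congrArg (· + s * f (0, 1)) (LinearMap.pi_apply_eq_sum_univ L z)

theorem nonneg_of_forall_lt_add_mul {a u r : ℝ} (h : ∀ k : ℝ, 0 ≤ k → u < a + k * r) :
    0 ≤ r := by
  by_contra! hr
  have hk := h ((a - u) / -r) (div_nonneg (by linarith [h 0 le_rfl]) (by linarith))
  rw [div_mul_eq_mul_div, div_neg, mul_div_cancel_right₀ _ hr.ne] at hk
  linarith

section AffineMinorant

variable {m : ℕ} {V : (Fin m → ℝ) → ℝ} {dV : Set (Fin m → ℝ)}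

theorem properLscConvex.exists_separation (hV : properLscConvex V dV) {y : Fin m → ℝ} {t : ℝ}
    (hyt : ¬(y ∈ dV ∧ V y ≤ t)) :
    ∃ (g : Fin m → ℝ) (r u : ℝ), 0 ≤ r ∧ y ⬝ᵥ g + t * r < u ∧
      ∀ y' ∈ dV, u < y' ⬝ᵥ g + V y' * r := by
  obtain ⟨⟨y₀, hy₀⟩, hconv, hclosed⟩ := hV
  obtain ⟨f, u, hfy, hfepi⟩ := geometric_hahn_banach_point_closed hconv.convex_epigraph hclosed
    (x := (y, t)) hyt
  obtain ⟨g, r, hf⟩ := exists_dotProduct_add_mul f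
  refine ⟨g, r, u, ?_, hf y t ▸ hfy, fun y' hy' => ?_⟩
  · -- the epigraph contains the upward ray above `(y₀, V y₀)`, so `0 ≤ r`
    refine nonneg_of_forall_lt_add_mul (a := y₀ ⬝ᵥ g + V y₀ * r) (u := u) fun k hk => ?_
    have := hfepi (y₀, V y₀ + k) ⟨hy₀, by linarith⟩
    rw [hf] at this
    linarith
  · exact hf y' (V y') ▸ hfepi (y', V y') ⟨hy', le_rfl⟩

theorem exists_minorant_gt_of_pos {y g : Fin m → ℝ} {t r u : ℝ} (hr : 0 < r)
    (hy : y ⬝ᵥ g + t * r < u) (hub : ∀ y' ∈ dV, u < y' ⬝ᵥ g + V y' * r) :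
    ∃ (σ : Fin m → ℝ) (β : ℝ), (∀ y' ∈ dV, y' ⬝ᵥ σ - β ≤ V y') ∧ t < y ⬝ᵥ σ - β := by
  have hdot : ∀ z : Fin m → ℝ, z ⬝ᵥ (-r⁻¹ • g) - -u / r = (u - z ⬝ᵥ g) / r := fun z => by
    rw [dotProduct_smul, smul_eq_mul]
    field_simp
    ring
  refine ⟨-r⁻¹ • g, -u / r, fun y' hy' => ?_, ?_⟩
  · rw [hdot, div_le_iff₀ hr]
    linarith [hub y' hy']
  · rw [hdot, lt_div_iff₀ hr]
    linarith

theorem properLscConvex.exists_minorant (hV : properLscConvex V dV) :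
    ∃ (σ : Fin m → ℝ) (β : ℝ), ∀ y' ∈ dV, y' ⬝ᵥ σ - β ≤ V y' := by
  obtain ⟨y₀, hy₀⟩ := hV.1
  obtain ⟨g, r, u, hr, hy, hub⟩ := hV.exists_separation (y := y₀) (t := V y₀ - 1)
    fun h => by linarith [h.2]
  have hr : 0 < r := hr.lt_of_ne fun h => by
    subst h
    linarith [hub y₀ hy₀]
  obtain ⟨σ, β, hmin, -⟩ := exists_minorant_gt_of_pos hr hy hub
  exact ⟨σ, β, hmin⟩

-- A vertical separating hyperplane is tilted by a large multiple of `g` into a given minorant.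
theorem exists_minorant_gt_of_vertical {σ₀ y g : Fin m → ℝ} {β₀ t u : ℝ}
    (hmin : ∀ y' ∈ dV, y' ⬝ᵥ σ₀ - β₀ ≤ V y') (hy : y ⬝ᵥ g < u) (hub : ∀ y' ∈ dV, u < y' ⬝ᵥ g) :
    ∃ (σ : Fin m → ℝ) (β : ℝ), (∀ y' ∈ dV, y' ⬝ᵥ σ - β ≤ V y') ∧ t < y ⬝ᵥ σ - β := by
  set c := (|t - (y ⬝ᵥ σ₀ - β₀)| + 1) / (u - y ⬝ᵥ g)
  have hgap : 0 < u - y ⬝ᵥ g := by linarith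
  have hc : 0 ≤ c := by positivity
  have htilt : ∀ z : Fin m → ℝ, z ⬝ᵥ (σ₀ - c • g) - (β₀ - c * u) =
      z ⬝ᵥ σ₀ - β₀ + c * (u - z ⬝ᵥ g) := fun z => by
    rw [dotProduct_sub, dotProduct_smul, smul_eq_mul]
    ring
  refine ⟨σ₀ - c • g, β₀ - c * u, fun y' hy' => ?_, ?_⟩
  · rw [htilt]
    nlinarith [hmin y' hy', hub y' hy']
  · rw [htilt, div_mul_cancel₀ _ hgap.ne']
    linarith [le_abs_self (t - (y ⬝ᵥ σ₀ - β₀))]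

theorem properLscConvex.exists_minorant_gt (hV : properLscConvex V dV) {y : Fin m → ℝ} {t : ℝ}
    (hyt : ¬(y ∈ dV ∧ V y ≤ t)) :
    ∃ (σ : Fin m → ℝ) (β : ℝ), (∀ y' ∈ dV, y' ⬝ᵥ σ - β ≤ V y') ∧ t < y ⬝ᵥ σ - β := by
  obtain ⟨g, r, u, hr, hy, hub⟩ := hV.exists_separation hyt
  rcases hr.lt_or_eq with hr | rfl
  · exact exists_minorant_gt_of_pos hr hy hub
  · obtain ⟨σ₀, β₀, hmin⟩ := hV.exists_minorant
    simp only [mul_zero, add_zero] at hy hub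
    exact exists_minorant_gt_of_vertical hmin hy hub

end AffineMinorant

namespace isConjugate

variable {m : ℕ} {V Vs : (Fin m → ℝ) → ℝ} {dV dVs : Set (Fin m → ℝ)}

theorem exists_dotProduct_sub_gt (hconj : isConjugate V dV Vs dVs) (hV : properLscConvex V dV)
    {y : Fin m → ℝ} {t : ℝ} (hyt : ¬(y ∈ dV ∧ V y ≤ t)) :
    ∃ σ ∈ dVs, t < y ⬝ᵥ σ - Vs σ := by
  obtain ⟨σ, β, hmin, hlt⟩ := hV.exists_minorant_gt hyt
  obtain ⟨hσ, hle⟩ := hconj.mem_and_le_of_minorant hV.1 hmin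
  exact ⟨σ, hσ, by linarith⟩

theorem mem_and_eq_of_mem_subdiff (hconj : isConjugate V dV Vs dVs) (hV : properLscConvex V dV)
    {σ y : Fin m → ℝ} (hy : y ∈ subdiff Vs dVs σ) :
    y ∈ dV ∧ V y = y ⬝ᵥ σ - Vs σ := by
  obtain ⟨hσ, hsub⟩ := hy
  have hepi : y ∈ dV ∧ V y ≤ y ⬝ᵥ σ - Vs σ := by
    by_contra hyt
    obtain ⟨σ', hσ', hgt⟩ := hconj.exists_dotProduct_sub_gt hV hyt
    have := hsub σ' hσ'
    rw [sub_dotProduct, dotProduct_comm σ' y, dotProduct_comm σ y] at this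
    linarith
  exact ⟨hepi.1, le_antisymm hepi.2 (by linarith [hconj.dotProduct_sub_le hσ hepi.1])⟩

theorem mem_subdiff_of_eq (hconj : isConjugate V dV Vs dVs) {σ y : Fin m → ℝ} (hσ : σ ∈ dVs)
    (hy : y ∈ dV) (heq : V y = y ⬝ᵥ σ - Vs σ) : σ ∈ subdiff V dV y := by
  refine ⟨hy, fun y' hy' => ?_⟩
  rw [sub_dotProduct]
  linarith [hconj.dotProduct_sub_le hσ hy']

end isConjugate

theorem statement2_general {n m : ℕ}
    (A0 : Matrix (Fin n) (Fin n) ℝ) (A : Fin m → Matrix (Fin n) (Fin n) ℝ)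
    (b0 : Fin n → ℝ) (b : Fin m → Fin n → ℝ) (c : Fin m → ℝ)
    (V Vs : (Fin m → ℝ) → ℝ) (dV dVs : Set (Fin m → ℝ))
    (hV : properLscConvex V dV) (hconj : isConjugate V dV Vs dVs)
    (D : (Fin m → ℝ) → ℝ)
    (hD : ∀ σ ∈ dVs, bvec b0 b σ ∈ Set.range (Amat A0 A σ).mulVec →
      ∀ x, Amat A0 A σ *ᵥ x = bvec b0 b σ →
        D σ = qf A0 b0 0 x + qvec A b c x ⬝ᵥ σ - Vs σ)
    (xb : Fin n → ℝ) (σb : Fin m → ℝ)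
    (hcrit : Amat A0 A σb *ᵥ xb = bvec b0 b σb)
    (hsub : qvec A b c xb ∈ subdiff Vs dVs σb) :
    qvec A b c xb ∈ dV ∧
    bvec b0 b σb ∈ Set.range (Amat A0 A σb).mulVec ∧
    σb ∈ subdiff V dV (qvec A b c xb) ∧
    qf A0 b0 0 xb + V (qvec A b c xb) =
      qf A0 b0 0 xb + qvec A b c xb ⬝ᵥ σb - Vs σb ∧
    qf A0 b0 0 xb + qvec A b c xb ⬝ᵥ σb - Vs σb = D σb := by
  have hσb : σb ∈ dVs := hsub.1
  obtain ⟨hdom, heq⟩ := hconj.mem_and_eq_of_mem_subdiff hV hsub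
  have hcol : bvec b0 b σb ∈ Set.range (Amat A0 A σb).mulVec := ⟨xb, hcrit⟩
  exact ⟨hdom, hcol, hconj.mem_subdiff_of_eq hσb hdom heq, by rw [heq]; ring,
    (hD σb hσb hcol xb hcrit).symm⟩

/-- If `(xb,σb) ∈ ℝⁿ × dom V*` satisfies `A(σb)xb = b(σb)` and
`q(xb) ∈ ∂V*(σb)`, then `xb ∈ dom f`, `σb ∈ S_col`, `σb ∈ ∂V(q(xb))`, and
`f(xb) = Ξ(xb,σb) = D(σb)`. -/
theorem statement2 {n m : ℕ}
    (A0 : Matrix (Fin n) (Fin n) ℝ) (A : Fin m → Matrix (Fin n) (Fin n) ℝ)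
    (b0 : Fin n → ℝ) (b : Fin m → Fin n → ℝ) (c : Fin m → ℝ)
    (hA0 : A0.IsSymm) (hA : ∀ i, (A i).IsSymm)
    (V Vs : (Fin m → ℝ) → ℝ) (dV dVs : Set (Fin m → ℝ))
    (hV : properLscConvex V dV) (hconj : isConjugate V dV Vs dVs)
    (D : (Fin m → ℝ) → ℝ)
    (hD : ∀ σ ∈ dVs, bvec b0 b σ ∈ Set.range (Amat A0 A σ).mulVec →
      ∀ x, Amat A0 A σ *ᵥ x = bvec b0 b σ →
        D σ = qf A0 b0 0 x + qvec A b c x ⬝ᵥ σ - Vs σ)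
    (xb : Fin n → ℝ) (σb : Fin m → ℝ) (hσdom : σb ∈ dVs)
    (hcrit : Amat A0 A σb *ᵥ xb = bvec b0 b σb)
    (hsub : qvec A b c xb ∈ subdiff Vs dVs σb) :
    qvec A b c xb ∈ dV ∧
    bvec b0 b σb ∈ Set.range (Amat A0 A σb).mulVec ∧
    σb ∈ subdiff V dV (qvec A b c xb) ∧
    qf A0 b0 0 xb + V (qvec A b c xb) =
      qf A0 b0 0 xb + qvec A b c xb ⬝ᵥ σb - Vs σb ∧
    qf A0 b0 0 xb + qvec A b c xb ⬝ᵥ σb - Vs σb = D σb :=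
  statement2_general A0 A b0 b c V Vs dV dVs hV hconj D hD xb σb hcrit hsub
end
end

section
/- Let (x̄,σ̄) ∈ ℝⁿ × int(dom V*) be a critical point of Ξ, i.e., A(σ̄)x̄ = b(σ̄) and q(x̄) = ∇V*(σ̄). Then x̄ ∈ X₀, σ̄ ∈ S_col, x̄ is a critical point of f (∇f(x̄) = 0), and f(x̄) = Ξ(x̄,σ̄) = D(σ̄); moreover, if σ̄ ∈ S₀ then σ̄ is a critical point of D (∇D(σ̄) = 0). -/
open Matrix Set

noncomputable section

/-- `V ∈ Γ_sc(ℝᵐ)`: a proper lsc convex function of Legendre type, i.e. essentially smooth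
(differentiable on the nonempty interior of its domain, with gradient `gV`, and with empty
subdifferential outside this interior) and essentially strictly convex. -/
def LegendreType {m : ℕ} (V : (Fin m → ℝ) → ℝ) (dV : Set (Fin m → ℝ))
    (gV : (Fin m → ℝ) → (Fin m → ℝ)) : Prop :=
  (interior dV).Nonempty ∧
  (∀ y ∈ interior dV, HasFDerivAt V (dotCLM (gV y)) y) ∧
  (∀ y, y ∉ interior dV → subdiff V dV y = ∅) ∧
  StrictConvexOn ℝ (interior dV) V

/-!
Write `ȳ = q(x̄) = ∇V*(σ̄)`. Separating `(ȳ, ⟨ȳ, σ̄⟩ − V*(σ̄))` from the closed convex epigraph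
of `V` and comparing with the slope of `V*` at `σ̄` shows that the Fenchel–Young inequality is an
equality at `(ȳ, σ̄)`. Hence `σ̄ ∈ ∂V(ȳ)`, essential smoothness puts `ȳ` in `int (dom V)`, and
there `σ̄ = ∇V(ȳ)`. By the chain rule `∇f(x) = A(σ)x − b(σ)` with `σ = ∇V(q(x))`, which vanishes
at `x̄`. Near an invertible `A(σ̄)` the dual function is `σ ↦ Ξ(A(σ)⁻¹b(σ), σ)`, whose inner map
is differentiable by Cramer's rule, while `Ξ` itself has zero derivative at `(x̄, σ̄)`.
-/

open Filter Topology

variable {n m k : ℕ}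

@[simp] theorem dotCLM_apply (g v : Fin k → ℝ) : dotCLM g v = g ⬝ᵥ v := rfl

@[simp] theorem dotCLM_zero : dotCLM (0 : Fin k → ℝ) = 0 := by
  ext v
  simp

@[simp] theorem matCLM_apply {l : ℕ} (M : Matrix (Fin l) (Fin k) ℝ) (v : Fin k → ℝ) :
    matCLM M v = M *ᵥ v := rfl

theorem hasFDerivAt_qf {A : Matrix (Fin n) (Fin n) ℝ} (hA : A.IsSymm) (b : Fin n → ℝ) (c : ℝ)
    (x : Fin n → ℝ) : HasFDerivAt (qf A b c) (dotCLM (A *ᵥ x - b)) x := by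
  have hquad : HasFDerivAt (fun y : Fin n → ℝ => y ⬝ᵥ A *ᵥ y)
      (∑ i, (x i • ContinuousLinearMap.proj i ∘L matCLM A
        + (A *ᵥ x) i • ContinuousLinearMap.proj i)) x :=
    HasFDerivAt.fun_sum fun i _ => (hasFDerivAt_apply i x).mul
      (ContinuousLinearMap.proj i ∘L matCLM A).hasFDerivAt
  refine (((hquad.const_mul (1 / 2 : ℝ)).sub (dotCLM b).hasFDerivAt).add_const c).congr_fderiv ?_
  ext v
  have hsymm : x ⬝ᵥ A *ᵥ v = A *ᵥ x ⬝ᵥ v := by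
    rw [dotProduct_mulVec, ← mulVec_transpose, hA.eq]
  simp only [_root_.sub_apply, _root_.add_apply, _root_.smul_apply, _root_.sum_apply,
    ContinuousLinearMap.comp_apply, ContinuousLinearMap.proj_apply, matCLM_apply, dotCLM_apply,
    smul_eq_mul, Finset.sum_add_distrib, sub_dotProduct]
  change 1 / 2 * (x ⬝ᵥ A *ᵥ v + A *ᵥ x ⬝ᵥ v) - b ⬝ᵥ v = _
  rw [hsymm]
  ring

theorem hasFDerivAt_qvec {A : Fin m → Matrix (Fin n) (Fin n) ℝ} (hA : ∀ i, (A i).IsSymm)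
    (b : Fin m → Fin n → ℝ) (c : Fin m → ℝ) (x : Fin n → ℝ) :
    HasFDerivAt (qvec A b c) (ContinuousLinearMap.pi fun i => dotCLM (A i *ᵥ x - b i)) x :=
  hasFDerivAt_pi.2 fun i => hasFDerivAt_qf (hA i) (b i) (c i) x

theorem Amat_mulVec_sub_bvec (A0 : Matrix (Fin n) (Fin n) ℝ) (A : Fin m → Matrix (Fin n) (Fin n) ℝ)
    (b0 : Fin n → ℝ) (b : Fin m → Fin n → ℝ) (σ : Fin m → ℝ) (x : Fin n → ℝ) :
    Amat A0 A σ *ᵥ x - bvec b0 b σ = A0 *ᵥ x - b0 + ∑ k, σ k • (A k *ᵥ x - b k) := by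
  simp only [Amat, bvec, add_mulVec, sum_mulVec, smul_mulVec, smul_sub, Finset.sum_sub_distrib]
  abel

theorem Amat_mulVec_sub_bvec_dotProduct (A0 : Matrix (Fin n) (Fin n) ℝ)
    (A : Fin m → Matrix (Fin n) (Fin n) ℝ) (b0 : Fin n → ℝ) (b : Fin m → Fin n → ℝ)
    (σ : Fin m → ℝ) (x v : Fin n → ℝ) :
    (Amat A0 A σ *ᵥ x - bvec b0 b σ) ⬝ᵥ v
      = (A0 *ᵥ x - b0) ⬝ᵥ v + σ ⬝ᵥ fun k => (A k *ᵥ x - b k) ⬝ᵥ v := by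
  rw [Amat_mulVec_sub_bvec, add_dotProduct, sum_dotProduct]
  simp only [smul_dotProduct, smul_eq_mul]
  rfl

/-- The total complementary function `Ξ`. -/
def totalCompl (A0 : Matrix (Fin n) (Fin n) ℝ) (A : Fin m → Matrix (Fin n) (Fin n) ℝ)
    (b0 : Fin n → ℝ) (b : Fin m → Fin n → ℝ) (c : Fin m → ℝ) (Vs : (Fin m → ℝ) → ℝ)
    (x : Fin n → ℝ) (σ : Fin m → ℝ) : ℝ :=
  qf A0 b0 0 x + qvec A b c x ⬝ᵥ σ - Vs σ

section Critical

variable {A0 : Matrix (Fin n) (Fin n) ℝ} {A : Fin m → Matrix (Fin n) (Fin n) ℝ}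
  (b0 : Fin n → ℝ) (b : Fin m → Fin n → ℝ) (c : Fin m → ℝ)

theorem hasFDerivAt_qf_add_comp_qvec (hA0 : A0.IsSymm) (hA : ∀ i, (A i).IsSymm) (c0 : ℝ)
    {φ : (Fin m → ℝ) → ℝ} {g : Fin m → ℝ} {x : Fin n → ℝ}
    (hφ : HasFDerivAt φ (dotCLM g) (qvec A b c x)) :
    HasFDerivAt (fun y => qf A0 b0 c0 y + φ (qvec A b c y))
      (dotCLM (Amat A0 A g *ᵥ x - bvec b0 b g)) x := by
  refine ((hasFDerivAt_qf hA0 b0 c0 x).add (hφ.comp x (hasFDerivAt_qvec hA b c x))).congr_fderiv ?_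
  ext v
  rw [dotCLM_apply, Amat_mulVec_sub_bvec_dotProduct]
  simp only [_root_.add_apply, dotCLM_apply, sub_dotProduct, ContinuousLinearMap.comp_apply,
    ContinuousLinearMap.coe_pi']

theorem hasFDerivAt_totalCompl (hA0 : A0.IsSymm) (hA : ∀ i, (A i).IsSymm)
    {Vs : (Fin m → ℝ) → ℝ} {g σ : Fin m → ℝ} (hVs : HasFDerivAt Vs (dotCLM g) σ)
    (x : Fin n → ℝ) :
    HasFDerivAt (fun p : (Fin n → ℝ) × (Fin m → ℝ) => totalCompl A0 A b0 b c Vs p.1 p.2)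
      (dotCLM (Amat A0 A σ *ᵥ x - bvec b0 b σ) ∘L ContinuousLinearMap.fst ℝ _ _
        + dotCLM (qvec A b c x - g) ∘L ContinuousLinearMap.snd ℝ _ _) (x, σ) := by
  have hfst := hasFDerivAt_fst (𝕜 := ℝ) (p := (x, σ))
  have hsnd := hasFDerivAt_snd (𝕜 := ℝ) (p := (x, σ))
  have hsum := HasFDerivAt.fun_sum (u := Finset.univ) fun i _ =>
    ((hasFDerivAt_qf (hA i) (b i) (c i) x).comp (x, σ) hfst).mul
      ((hasFDerivAt_apply i σ).comp (x, σ) hsnd)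
  have h := (((hasFDerivAt_qf hA0 b0 0 x).comp (x, σ) hfst).add hsum).sub (hVs.comp (x, σ) hsnd)
  refine h.congr_fderiv (ContinuousLinearMap.ext fun p => ?_)
  simp only [Function.comp_apply, _root_.sub_apply, _root_.add_apply,
    ContinuousLinearMap.comp_apply, ContinuousLinearMap.coe_fst', ContinuousLinearMap.coe_snd',
    dotCLM_apply, _root_.sum_apply, _root_.smul_apply, ContinuousLinearMap.proj_apply,
    smul_eq_mul, Finset.sum_add_distrib]
  rw [Amat_mulVec_sub_bvec_dotProduct, sub_dotProduct (qvec A b c x)]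
  simp only [dotProduct, qvec]
  ring

end Critical

section Conjugate

variable {V Vs : (Fin m → ℝ) → ℝ} {dV dVs : Set (Fin m → ℝ)} {σ y : Fin m → ℝ}

theorem isConjugate.dotProduct_sub_le_s4 (hconj : isConjugate V dV Vs dVs) (hσ : σ ∈ dVs)
    (hy : y ∈ dV) : y ⬝ᵥ σ - V y ≤ Vs σ := by
  rw [hconj.2 σ hσ]
  rw [hconj.1] at hσ
  exact le_csSup hσ ⟨y, hy, rfl⟩

theorem isConjugate.mem_and_le_of_forall_le (hconj : isConjugate V dV Vs dVs) (hdV : dV.Nonempty)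
    {r : ℝ} (hr : ∀ y ∈ dV, y ⬝ᵥ σ - V y ≤ r) : σ ∈ dVs ∧ Vs σ ≤ r := by
  have hbdd : r ∈ upperBounds ((fun y => y ⬝ᵥ σ - V y) '' dV) := by
    rintro _ ⟨y, hy, rfl⟩
    exact hr y hy
  have hσ : σ ∈ dVs := hconj.1 ▸ ⟨r, hbdd⟩
  exact ⟨hσ, hconj.2 σ hσ ▸ csSup_le (hdV.image _) hbdd⟩

theorem dotProduct_le_of_hasFDerivAt {φ : (Fin m → ℝ) → ℝ} {w : Fin m → ℝ} {r : ℝ}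
    (hφ : HasFDerivAt φ (dotCLM y) σ)
    (h : ∀ᶠ t in 𝓝[>] (0 : ℝ), φ (σ + t • w) - φ σ ≤ t * r) : y ⬝ᵥ w ≤ r := by
  refine le_of_tendsto (hφ.hasLineDerivAt w).tendsto_slope_zero_right ?_
  filter_upwards [h, self_mem_nhdsWithin] with t ht (htpos : 0 < t)
  rw [smul_eq_mul, inv_mul_le_iff₀ htpos]
  exact ht

theorem StrongDual.prod_apply_eq_dotProduct_add (f : StrongDual ℝ ((Fin m → ℝ) × ℝ))
    (p : Fin m → ℝ) (r : ℝ) :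
    f (p, r) = p ⬝ᵥ (fun i => f (Pi.single i 1, 0)) + r * f (0, 1) := by
  have hp : (p, (0 : ℝ)) = ∑ i, p i • ((Pi.single i 1 : Fin m → ℝ), (0 : ℝ)) := by
    ext <;> simp [Prod.fst_sum, Prod.snd_sum, Finset.sum_apply, Pi.single_apply]
  rw [show (p, r) = (p, 0) + r • ((0 : Fin m → ℝ), (1 : ℝ)) by simp, map_add, map_smul, hp,
    map_sum]
  simp only [map_smul, smul_eq_mul]
  rfl

theorem isConjugate.mem_epigraph_of_hasFDerivAt (hV : properLscConvex V dV)
    (hconj : isConjugate V dV Vs dVs) (hσ : σ ∈ dVs) (hVs : HasFDerivAt Vs (dotCLM y) σ) :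
    y ∈ dV ∧ V y ≤ y ⬝ᵥ σ - Vs σ := by
  obtain ⟨⟨y0, hy0⟩, hconv, hclosed⟩ := hV
  by_contra hout
  obtain ⟨f, u, hf, hu⟩ := geometric_hahn_banach_closed_point (x := (y, y ⬝ᵥ σ - Vs σ))
    hconv.convex_epigraph hclosed hout
  set s : Fin m → ℝ := fun i => f (Pi.single i 1, 0)
  set β := f (0, 1)
  have hf_eq := StrongDual.prod_apply_eq_dotProduct_add f
  have hβ : β ≤ 0 := by
    by_contra! hβ
    have hlt := hf (y0, max (V y0) ((u - y0 ⬝ᵥ s) / β)) ⟨hy0, le_max_left _ _⟩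
    have hle := mul_le_mul_of_nonneg_right (le_max_right (V y0) ((u - y0 ⬝ᵥ s) / β)) hβ.le
    rw [div_mul_cancel₀ _ hβ.ne'] at hle
    rw [hf_eq] at hlt
    linarith
  -- Combining Fenchel–Young at `σ` with the separation inequality bounds the growth of `V*`
  -- along `s + β • σ`; the resulting slope bound contradicts the separation of the point.
  have hdesc : ∀ᶠ t in 𝓝[>] (0 : ℝ),
      Vs (σ + t • (s + β • σ)) - Vs σ ≤ t * (u + β * Vs σ) := by
    filter_upwards [Ioo_mem_nhdsGT (one_div_pos.2 (by linarith : (0 : ℝ) < 1 - β))]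
      with t ⟨ht0, ht1⟩
    have hcoef : 0 ≤ 1 + t * β := by
      rw [lt_div_iff₀ (by linarith)] at ht1
      nlinarith
    have hbound : ∀ p ∈ dV,
        p ⬝ᵥ (σ + t • (s + β • σ)) - V p ≤ Vs σ + t * (u + β * Vs σ) := by
      intro p hp
      have hfy := mul_le_mul_of_nonneg_left (hconj.dotProduct_sub_le_s4 hσ hp) hcoef
      have hsep := hf (p, V p) ⟨hp, le_rfl⟩
      rw [hf_eq] at hsep
      have e : p ⬝ᵥ (σ + t • (s + β • σ)) - V p
          = (1 + t * β) * (p ⬝ᵥ σ - V p) + t * (p ⬝ᵥ s + V p * β) := by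
        simp only [dotProduct_add, dotProduct_smul, smul_eq_mul]
        ring
      rw [e]
      nlinarith
    have := (hconj.mem_and_le_of_forall_le ⟨y0, hy0⟩ hbound).2
    linarith
  have hderiv := dotProduct_le_of_hasFDerivAt hVs hdesc
  rw [hf_eq] at hu
  simp only [dotProduct_add, dotProduct_smul, smul_eq_mul] at hderiv
  nlinarith

end Conjugate

section Legendre

variable {V Vs : (Fin m → ℝ) → ℝ} {dV dVs : Set (Fin m → ℝ)} {σ y : Fin m → ℝ}

theorem isConjugate.mem_subdiff (hconj : isConjugate V dV Vs dVs) (hσ : σ ∈ dVs) (hy : y ∈ dV)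
    (heq : V y = y ⬝ᵥ σ - Vs σ) : σ ∈ subdiff V dV y := by
  refine ⟨hy, fun y' hy' => ?_⟩
  have := hconj.dotProduct_sub_le_s4 hσ hy'
  rw [sub_dotProduct]
  linarith

theorem LegendreType.mem_interior_of_mem_subdiff {gV : (Fin m → ℝ) → (Fin m → ℝ)}
    (hLeg : LegendreType V dV gV) (h : σ ∈ subdiff V dV y) : y ∈ interior dV := by
  by_contra hy
  rw [hLeg.2.2.1 y hy] at h
  exact h

theorem eq_of_mem_subdiff_of_hasFDerivAt {g : Fin m → ℝ} (hy : y ∈ interior dV)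
    (hV : HasFDerivAt V (dotCLM g) y) (hσ : σ ∈ subdiff V dV y) : σ = g := by
  have hmin : IsLocalMin (fun z => V z - dotCLM σ z) y := by
    filter_upwards [isOpen_interior.mem_nhds hy] with z hz
    have := hσ.2 z (interior_subset hz)
    rw [sub_dotProduct, dotProduct_comm z, dotProduct_comm y] at this
    simp only [dotCLM_apply]
    linarith
  have hzero := hmin.hasFDerivAt_eq_zero (hV.sub (dotCLM σ).hasFDerivAt)
  ext i
  simpa [sub_eq_zero, eq_comm] using congr($hzero (Pi.single i 1))

end Legendre

section MatrixCalculus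

variable {𝕜 E ι : Type*} [NontriviallyNormedField 𝕜] [NormedAddCommGroup E] [NormedSpace 𝕜 E]
  [Fintype ι] [DecidableEq ι] {M : E → Matrix ι ι 𝕜} {v : E → ι → 𝕜} {z : E}

theorem DifferentiableAt.matrix_det (hM : ∀ i j, DifferentiableAt 𝕜 (fun x => M x i j) z) :
    DifferentiableAt 𝕜 (fun x => (M x).det) z := by
  simp only [det_apply']
  exact .fun_sum fun p _ =>
    (HasFDerivAt.finsetProd fun i _ => (hM (p i) i).hasFDerivAt).differentiableAt.const_mul _

theorem DifferentiableAt.matrix_inv_mulVec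
    (hM : ∀ i j, DifferentiableAt 𝕜 (fun x => M x i j) z)
    (hv : ∀ i, DifferentiableAt 𝕜 (fun x => v x i) z) (hdet : IsUnit (M z).det) :
    DifferentiableAt 𝕜 (fun x => (M x)⁻¹ *ᵥ v x) z := by
  have hcramer : ∀ x i, ((M x)⁻¹ *ᵥ v x) i = ((M x).det)⁻¹ * ((M x).updateCol i (v x)).det := by
    intro x i
    rw [inv_def, smul_mulVec, ← cramer_eq_adjugate_mulVec, Ring.inverse_eq_inv', Pi.smul_apply,
      cramer_apply, smul_eq_mul]
  simp only [differentiableAt_pi, hcramer]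
  refine fun i => ((DifferentiableAt.matrix_det hM).inv hdet.ne_zero).mul
    (DifferentiableAt.matrix_det fun i' j => ?_)
  simp only [updateCol_apply]
  split_ifs
  exacts [hv i', hM i' j]

end MatrixCalculus

section Dual

variable (A0 : Matrix (Fin n) (Fin n) ℝ) (A : Fin m → Matrix (Fin n) (Fin n) ℝ)
  (b0 : Fin n → ℝ) (b : Fin m → Fin n → ℝ) (c : Fin m → ℝ)

theorem differentiable_Amat_apply (i j : Fin n) : Differentiable ℝ (fun σ => Amat A0 A σ i j) := by
  simp only [Amat, Matrix.add_apply, Matrix.sum_apply, Matrix.smul_apply, smul_eq_mul]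
  fun_prop

theorem differentiable_bvec_apply (i : Fin n) : Differentiable ℝ (fun σ => bvec b0 b σ i) := by
  simp only [bvec, Pi.add_apply, Finset.sum_apply, Pi.smul_apply, smul_eq_mul]
  fun_prop

theorem hasFDerivAt_dual_eq_zero {A0 A} (hA0 : A0.IsSymm) (hA : ∀ i, (A i).IsSymm)
    {Vs : (Fin m → ℝ) → ℝ} {D : (Fin m → ℝ) → ℝ} {x : Fin n → ℝ} {σ : Fin m → ℝ}
    (hVs : HasFDerivAt Vs (dotCLM (qvec A b c x)) σ) (hcrit : Amat A0 A σ *ᵥ x = bvec b0 b σ)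
    (hdet : IsUnit (Amat A0 A σ).det)
    (hD : ∀ᶠ τ in 𝓝 σ, ∀ x', Amat A0 A τ *ᵥ x' = bvec b0 b τ →
      D τ = totalCompl A0 A b0 b c Vs x' τ) :
    HasFDerivAt D (0 : (Fin m → ℝ) →L[ℝ] ℝ) σ := by
  set xs : (Fin m → ℝ) → (Fin n → ℝ) := fun τ => (Amat A0 A τ)⁻¹ *ᵥ bvec b0 b τ
  have hsolve : ∀ τ, IsUnit (Amat A0 A τ).det → Amat A0 A τ *ᵥ xs τ = bvec b0 b τ := by
    intro τ hτ
    simp only [xs, mulVec_mulVec, mul_nonsing_inv _ hτ, one_mulVec]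
  have hxs : xs σ = x := by
    simp only [xs, ← hcrit, mulVec_mulVec, nonsing_inv_mul _ hdet, one_mulVec]
  have hunit : ∀ᶠ τ in 𝓝 σ, IsUnit (Amat A0 A τ).det :=
    ((DifferentiableAt.matrix_det fun i j => (differentiable_Amat_apply A0 A i j).differentiableAt
      ).continuousAt.eventually_ne hdet.ne_zero).mono fun _ => Ne.isUnit
  have hΞ := hasFDerivAt_totalCompl b0 b c hA0 hA hVs x
  simp only [hcrit, sub_self, dotCLM_zero, ContinuousLinearMap.zero_comp, add_zero] at hΞ
  have hpath : HasFDerivAt (fun τ => (xs τ, τ)) _ σ :=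
    (DifferentiableAt.matrix_inv_mulVec
      (fun i j => (differentiable_Amat_apply A0 A i j).differentiableAt)
      (fun i => (differentiable_bvec_apply b0 b i).differentiableAt) hdet).hasFDerivAt.prodMk
      (hasFDerivAt_id σ)
  rw [← hxs] at hΞ
  have hcomp := HasFDerivAt.comp (f := fun τ => (xs τ, τ)) σ hΞ hpath
  rw [ContinuousLinearMap.zero_comp] at hcomp
  refine hcomp.congr_of_eventuallyEq ?_
  filter_upwards [hD, hunit] with τ hDτ hτ
  exact hDτ _ (hsolve τ hτ)

end Dual

/-- Let `V` be of Legendre type and `(x̄,σ̄) ∈ ℝⁿ × int(dom V*)` a critical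
point of `Ξ` (`A(σ̄)x̄ = b(σ̄)` and `q(x̄) = ∇V*(σ̄)`). Then `x̄ ∈ X₀`, `σ̄ ∈ S_col`, `x̄` is a
critical point of `f`, `f(x̄) = Ξ(x̄,σ̄) = D(σ̄)`, and if `σ̄ ∈ S₀` then `σ̄` is a critical
point of `D`. -/
theorem statement4 {n m : ℕ}
    (A0 : Matrix (Fin n) (Fin n) ℝ) (A : Fin m → Matrix (Fin n) (Fin n) ℝ)
    (b0 : Fin n → ℝ) (b : Fin m → Fin n → ℝ) (c : Fin m → ℝ)
    (hA0 : A0.IsSymm) (hA : ∀ i, (A i).IsSymm)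
    (V Vs : (Fin m → ℝ) → ℝ) (dV dVs : Set (Fin m → ℝ))
    (gV gVs : (Fin m → ℝ) → (Fin m → ℝ))
    (hV : properLscConvex V dV) (hLeg : LegendreType V dV gV)
    (hconj : isConjugate V dV Vs dVs)
    (hgVs : ∀ σ ∈ interior dVs, HasFDerivAt Vs (dotCLM (gVs σ)) σ)
    (D : (Fin m → ℝ) → ℝ)
    (hD : ∀ σ ∈ dVs, bvec b0 b σ ∈ Set.range (Amat A0 A σ).mulVec →
      ∀ x, Amat A0 A σ *ᵥ x = bvec b0 b σ →
        D σ = qf A0 b0 0 x + qvec A b c x ⬝ᵥ σ - Vs σ)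
    (xb : Fin n → ℝ) (σb : Fin m → ℝ) (hσint : σb ∈ interior dVs)
    (hcrit1 : Amat A0 A σb *ᵥ xb = bvec b0 b σb)
    (hcrit2 : qvec A b c xb = gVs σb) :
    qvec A b c xb ∈ interior dV ∧
    σb ∈ dVs ∧ bvec b0 b σb ∈ Set.range (Amat A0 A σb).mulVec ∧
    HasFDerivAt (fun x => qf A0 b0 0 x + V (qvec A b c x))
      (0 : (Fin n → ℝ) →L[ℝ] ℝ) xb ∧
    qf A0 b0 0 xb + V (qvec A b c xb) =
      qf A0 b0 0 xb + qvec A b c xb ⬝ᵥ σb - Vs σb ∧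
    qf A0 b0 0 xb + qvec A b c xb ⬝ᵥ σb - Vs σb = D σb ∧
    (IsUnit (Amat A0 A σb).det → HasFDerivAt D (0 : (Fin m → ℝ) →L[ℝ] ℝ) σb) := by
  have hσb : σb ∈ dVs := interior_subset hσint
  have hVs : HasFDerivAt Vs (dotCLM (qvec A b c xb)) σb := hcrit2 ▸ hgVs σb hσint
  obtain ⟨hy, hVy⟩ := hconj.mem_epigraph_of_hasFDerivAt hV hσb hVs
  have hfenchel : V (qvec A b c xb) = qvec A b c xb ⬝ᵥ σb - Vs σb :=
    le_antisymm hVy (by linarith [hconj.dotProduct_sub_le_s4 hσb hy])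
  have hsub := hconj.mem_subdiff hσb hy hfenchel
  have hyint := hLeg.mem_interior_of_mem_subdiff hsub
  have hgV := hLeg.2.1 _ hyint
  have hsol : bvec b0 b σb ∈ Set.range (Amat A0 A σb).mulVec := ⟨xb, hcrit1⟩
  refine ⟨hyint, hσb, hsol, ?_, by rw [hfenchel]; ring, (hD σb hσb hsol xb hcrit1).symm,
    fun hdet => hasFDerivAt_dual_eq_zero b0 b c hA0 hA hVs hcrit1 hdet ?_⟩
  · have hf := hasFDerivAt_qf_add_comp_qvec b0 b c hA0 hA 0 hgV
    rwa [← eq_of_mem_subdiff_of_hasFDerivAt hyint hgV hsub, hcrit1, sub_self, dotCLM_zero] at hf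
  · filter_upwards [isOpen_interior.mem_nhds hσint] with τ hτ x hx
    exact hD τ (interior_subset hτ) ⟨x, hx⟩ x hx
end
end

section
/- Let J ⊂ {1,…,m} and let (x̄,σ̄) ∈ ℝⁿ × ℝᵐ be a J-LKKT point of L, i.e., A(σ̄)x̄ = b(σ̄), and for all j ∈ Jᶜ: σ̄_j ≥ 0, q_j(x̄) ≤ 0 and σ̄_j·q_j(x̄) = 0, and for all j ∈ J: q_j(x̄) = 0. Then (x̄,σ̄) ∈ X_J × Y_col^J and q₀(x̄) = L(x̄,σ̄) = D_L(σ̄). Moreover, if A(σ̄) is positive semidefinite, then σ̄ ∈ Y_col^{J+} and q₀(x̄) = inf_{x ∈ X_J} q₀(x) = L(x̄,σ̄) = sup_{σ ∈ Y_col^{J+}} D_L(σ) = D_L(σ̄); furthermore, if A(σ̄) is positive definite, then x̄ is the unique global minimizer of q₀ on X_J. -/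
open Matrix Set

noncomputable section

/-! With `σ` fixed, the Lagrangian `L(·, σ)` is itself the quadratic function with data
`(A(σ), b(σ), Σ σₖ cₖ)`, so at any `x̄` with `A(σ) x̄ = b(σ)` it expands as
`L(x, σ) = L(x̄, σ) + ½ ⟨x - x̄, A(σ) (x - x̄)⟩`, and `x̄` minimizes `L(·, σ)` (strictly when
`A(σ) ≻ 0`). Complementary slackness gives `L(x̄, σ̄) = q₀(x̄)`, while `⟨q(x), σ⟩ ≤ 0` whenever
`x ∈ X_J` and `σ ∈ Γ_J`. Hence `q₀(x̄) = L(x̄, σ̄) ≤ L(x, σ̄) ≤ q₀(x)` on `X_J`, and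
`D_L(σ) = L(x_σ, σ) ≤ L(x̄, σ) ≤ q₀(x̄) = D_L(σ̄)` on `Y_col^{J+}`. -/

lemma qf_add {n : ℕ} (M N : Matrix (Fin n) (Fin n) ℝ) (v w : Fin n → ℝ) (c d : ℝ)
    (x : Fin n → ℝ) : qf (M + N) (v + w) (c + d) x = qf M v c x + qf N w d x := by
  simp only [qf, add_mulVec, dotProduct_add, add_dotProduct]
  ring

lemma qf_smul {n : ℕ} (t : ℝ) (M : Matrix (Fin n) (Fin n) ℝ) (v : Fin n → ℝ) (c : ℝ)
    (x : Fin n → ℝ) : qf (t • M) (t • v) (t * c) x = t * qf M v c x := by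
  simp only [qf, smul_mulVec, dotProduct_smul, smul_dotProduct, smul_eq_mul]
  ring

lemma qf_sum {n : ℕ} {ι : Type*} (s : Finset ι) (M : ι → Matrix (Fin n) (Fin n) ℝ)
    (v : ι → Fin n → ℝ) (c : ι → ℝ) (x : Fin n → ℝ) :
    qf (∑ i ∈ s, M i) (∑ i ∈ s, v i) (∑ i ∈ s, c i) x = ∑ i ∈ s, qf (M i) (v i) (c i) x := by
  classical
  induction s using Finset.induction_on with
  | empty => simp [qf]
  | insert i s hi ih => simp only [Finset.sum_insert hi, qf_add, ih]

lemma qf_add_qvec_dotProduct {n m : ℕ} (A0 : Matrix (Fin n) (Fin n) ℝ)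
    (A : Fin m → Matrix (Fin n) (Fin n) ℝ) (b0 : Fin n → ℝ) (b : Fin m → Fin n → ℝ)
    (c : Fin m → ℝ) (σ : Fin m → ℝ) (x : Fin n → ℝ) :
    qf A0 b0 0 x + qvec A b c x ⬝ᵥ σ
      = qf (Amat A0 A σ) (bvec b0 b σ) (∑ k, σ k * c k) x := by
  rw [Amat, bvec, ← zero_add (∑ k, σ k * c k), qf_add, qf_sum]
  simp only [qf_smul, qvec, dotProduct, mul_comm (qf _ _ _ x)]

lemma qf_eq_qf_add_of_mulVec_eq {n : ℕ} {M : Matrix (Fin n) (Fin n) ℝ} (hM : M.IsSymm)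
    {v x₀ : Fin n → ℝ} (c : ℝ) (h : M *ᵥ x₀ = v) (x : Fin n → ℝ) :
    qf M v c x = qf M v c x₀ + 1 / 2 * ((x - x₀) ⬝ᵥ M *ᵥ (x - x₀)) := by
  subst h
  have hsymm : x₀ ⬝ᵥ M *ᵥ x = x ⬝ᵥ M *ᵥ x₀ := by
    conv_lhs => rw [dotProduct_mulVec, ← hM.eq, vecMul_transpose, dotProduct_comm]
  simp only [qf, mulVec_sub, sub_dotProduct, dotProduct_sub, dotProduct_comm (M *ᵥ x₀), hsymm]
  ring

lemma qf_le_qf_of_posSemidef {n : ℕ} {M : Matrix (Fin n) (Fin n) ℝ} (hM : M.PosSemidef)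
    {v x₀ : Fin n → ℝ} (c : ℝ) (h : M *ᵥ x₀ = v) (x : Fin n → ℝ) :
    qf M v c x₀ ≤ qf M v c x := by
  have hquad : 0 ≤ (x - x₀) ⬝ᵥ M *ᵥ (x - x₀) := by
    simpa using hM.dotProduct_mulVec_nonneg (x - x₀)
  rw [qf_eq_qf_add_of_mulVec_eq (isHermitian_iff_isSymm.mp hM.isHermitian) c h x]
  linarith

lemma qf_lt_qf_of_posDef {n : ℕ} {M : Matrix (Fin n) (Fin n) ℝ} (hM : M.PosDef)
    {v x₀ : Fin n → ℝ} (c : ℝ) (h : M *ᵥ x₀ = v) {x : Fin n → ℝ} (hx : x ≠ x₀) :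
    qf M v c x₀ < qf M v c x := by
  have hquad : 0 < (x - x₀) ⬝ᵥ M *ᵥ (x - x₀) := by
    simpa using hM.dotProduct_mulVec_pos (sub_ne_zero.mpr hx)
  rw [qf_eq_qf_add_of_mulVec_eq (isHermitian_iff_isSymm.mp hM.isHermitian) c h x]
  linarith

section Lagrangian

variable {n m : ℕ} {A0 : Matrix (Fin n) (Fin n) ℝ} {A : Fin m → Matrix (Fin n) (Fin n) ℝ}
  {b0 : Fin n → ℝ} {b : Fin m → Fin n → ℝ} {c : Fin m → ℝ} {σ : Fin m → ℝ} {x₀ : Fin n → ℝ}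

lemma lagrangian_le_of_stationary (hσ : (Amat A0 A σ).PosSemidef)
    (hx₀ : Amat A0 A σ *ᵥ x₀ = bvec b0 b σ) (x : Fin n → ℝ) :
    qf A0 b0 0 x₀ + qvec A b c x₀ ⬝ᵥ σ ≤ qf A0 b0 0 x + qvec A b c x ⬝ᵥ σ := by
  simpa only [qf_add_qvec_dotProduct] using qf_le_qf_of_posSemidef hσ _ hx₀ x

lemma lagrangian_lt_of_stationary (hσ : (Amat A0 A σ).PosDef)
    (hx₀ : Amat A0 A σ *ᵥ x₀ = bvec b0 b σ) {x : Fin n → ℝ} (hx : x ≠ x₀) :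
    qf A0 b0 0 x₀ + qvec A b c x₀ ⬝ᵥ σ < qf A0 b0 0 x + qvec A b c x ⬝ᵥ σ := by
  simpa only [qf_add_qvec_dotProduct] using qf_lt_qf_of_posDef hσ _ hx₀ hx

lemma qvec_dotProduct_nonpos {J : Set (Fin m)} {x : Fin n → ℝ}
    (hxJ : ∀ j ∈ J, qf (A j) (b j) (c j) x = 0) (hxJc : ∀ j ∉ J, qf (A j) (b j) (c j) x ≤ 0)
    (hσ : ∀ j ∉ J, 0 ≤ σ j) : qvec A b c x ⬝ᵥ σ ≤ 0 := by
  refine Finset.sum_nonpos fun j _ => ?_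
  by_cases hj : j ∈ J
  · simp [qvec, hxJ j hj]
  · exact mul_nonpos_of_nonpos_of_nonneg (hxJc j hj) (hσ j hj)

lemma qvec_dotProduct_eq_zero {J : Set (Fin m)} {x : Fin n → ℝ}
    (hxJ : ∀ j ∈ J, qf (A j) (b j) (c j) x = 0)
    (hslack : ∀ j ∉ J, σ j * qf (A j) (b j) (c j) x = 0) : qvec A b c x ⬝ᵥ σ = 0 := by
  refine Finset.sum_eq_zero fun j _ => ?_
  by_cases hj : j ∈ J
  · simp [qvec, hxJ j hj]
  · simpa only [qvec, mul_comm] using hslack j hj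

end Lagrangian

theorem statement7_general {n m : ℕ}
    (A0 : Matrix (Fin n) (Fin n) ℝ) (A : Fin m → Matrix (Fin n) (Fin n) ℝ)
    (b0 : Fin n → ℝ) (b : Fin m → Fin n → ℝ) (c : Fin m → ℝ)
    (J : Set (Fin m))
    (DL : (Fin m → ℝ) → ℝ)
    (hDL : ∀ σ, bvec b0 b σ ∈ Set.range (Amat A0 A σ).mulVec →
      ∀ x, Amat A0 A σ *ᵥ x = bvec b0 b σ →
        DL σ = qf A0 b0 0 x + qvec A b c x ⬝ᵥ σ)
    (xb : Fin n → ℝ) (σb : Fin m → ℝ)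
    (hstat : Amat A0 A σb *ᵥ xb = bvec b0 b σb)
    (hJc : ∀ j ∉ J, 0 ≤ σb j ∧ qf (A j) (b j) (c j) xb ≤ 0 ∧
      σb j * qf (A j) (b j) (c j) xb = 0)
    (hJ : ∀ j ∈ J, qf (A j) (b j) (c j) xb = 0) :
    xb ∈ {x | (∀ j ∈ J, qf (A j) (b j) (c j) x = 0) ∧
        ∀ j ∉ J, qf (A j) (b j) (c j) x ≤ 0} ∧
    σb ∈ {σ | (∀ j ∉ J, 0 ≤ σ j) ∧ bvec b0 b σ ∈ Set.range (Amat A0 A σ).mulVec} ∧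
    qf A0 b0 0 xb = qf A0 b0 0 xb + qvec A b c xb ⬝ᵥ σb ∧
    qf A0 b0 0 xb + qvec A b c xb ⬝ᵥ σb = DL σb ∧
    ((Amat A0 A σb).PosSemidef →
      (∀ x, ((∀ j ∈ J, qf (A j) (b j) (c j) x = 0) ∧
          ∀ j ∉ J, qf (A j) (b j) (c j) x ≤ 0) →
        qf A0 b0 0 xb ≤ qf A0 b0 0 x) ∧
      (∀ σ, (∀ j ∉ J, 0 ≤ σ j) → bvec b0 b σ ∈ Set.range (Amat A0 A σ).mulVec →
        (Amat A0 A σ).PosSemidef → DL σ ≤ DL σb) ∧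
      ((Amat A0 A σb).PosDef →
        ∀ x, ((∀ j ∈ J, qf (A j) (b j) (c j) x = 0) ∧
            ∀ j ∉ J, qf (A j) (b j) (c j) x ≤ 0) →
          x ≠ xb → qf A0 b0 0 xb < qf A0 b0 0 x)) := by
  have hσbJc : ∀ j ∉ J, 0 ≤ σb j := fun j hj => (hJc j hj).1
  have hslack : qvec A b c xb ⬝ᵥ σb = 0 :=
    qvec_dotProduct_eq_zero hJ fun j hj => (hJc j hj).2.2
  have hL : qf A0 b0 0 xb = qf A0 b0 0 xb + qvec A b c xb ⬝ᵥ σb := by rw [hslack, add_zero]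
  have hDLb : DL σb = qf A0 b0 0 xb + qvec A b c xb ⬝ᵥ σb := hDL σb ⟨xb, hstat⟩ xb hstat
  refine ⟨⟨hJ, fun j hj => (hJc j hj).2.1⟩, ⟨hσbJc, xb, hstat⟩, hL, hDLb.symm,
    fun hpsd => ⟨fun x hx => ?_, fun σ hσ ⟨x, hx⟩ hpsdσ => ?_, fun hpd x hx hne => ?_⟩⟩
  · have := qvec_dotProduct_nonpos hx.1 hx.2 hσbJc
    linarith [lagrangian_le_of_stationary (c := c) hpsd hstat x]
  · have := qvec_dotProduct_nonpos hJ (fun j hj => (hJc j hj).2.1) hσ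
    linarith [hDL σ ⟨x, hx⟩ x hx, lagrangian_le_of_stationary (c := c) hpsdσ hx xb]
  · have := qvec_dotProduct_nonpos hx.1 hx.2 hσbJc
    linarith [lagrangian_lt_of_stationary (c := c) hpd hstat hne]

/-- If `(x̄,σ̄)` is a `J`-LKKT point of the Lagrangian `L`, then
`(x̄,σ̄) ∈ X_J × Y_col^J` and `q₀(x̄) = L(x̄,σ̄) = D_L(σ̄)`; if moreover `A(σ̄) ⪰ 0`, then
`σ̄ ∈ Y_col^{J+}` and `q₀(x̄) = inf_{X_J} q₀ = L(x̄,σ̄) = sup_{Y_col^{J+}} D_L = D_L(σ̄)`;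
if `A(σ̄) ≻ 0`, then `x̄` is the unique global minimizer of `q₀` on `X_J`. -/
theorem statement7 {n m : ℕ}
    (A0 : Matrix (Fin n) (Fin n) ℝ) (A : Fin m → Matrix (Fin n) (Fin n) ℝ)
    (b0 : Fin n → ℝ) (b : Fin m → Fin n → ℝ) (c : Fin m → ℝ)
    (hA0 : A0.IsSymm) (hA : ∀ i, (A i).IsSymm)
    (J : Set (Fin m))
    (DL : (Fin m → ℝ) → ℝ)
    (hDL : ∀ σ, bvec b0 b σ ∈ Set.range (Amat A0 A σ).mulVec →
      ∀ x, Amat A0 A σ *ᵥ x = bvec b0 b σ →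
        DL σ = qf A0 b0 0 x + qvec A b c x ⬝ᵥ σ)
    (xb : Fin n → ℝ) (σb : Fin m → ℝ)
    (hstat : Amat A0 A σb *ᵥ xb = bvec b0 b σb)
    (hJc : ∀ j ∉ J, 0 ≤ σb j ∧ qf (A j) (b j) (c j) xb ≤ 0 ∧
      σb j * qf (A j) (b j) (c j) xb = 0)
    (hJ : ∀ j ∈ J, qf (A j) (b j) (c j) xb = 0) :
    xb ∈ {x | (∀ j ∈ J, qf (A j) (b j) (c j) x = 0) ∧
        ∀ j ∉ J, qf (A j) (b j) (c j) x ≤ 0} ∧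
    σb ∈ {σ | (∀ j ∉ J, 0 ≤ σ j) ∧ bvec b0 b σ ∈ Set.range (Amat A0 A σ).mulVec} ∧
    qf A0 b0 0 xb = qf A0 b0 0 xb + qvec A b c xb ⬝ᵥ σb ∧
    qf A0 b0 0 xb + qvec A b c xb ⬝ᵥ σb = DL σb ∧
    ((Amat A0 A σb).PosSemidef →
      (∀ x, ((∀ j ∈ J, qf (A j) (b j) (c j) x = 0) ∧
          ∀ j ∉ J, qf (A j) (b j) (c j) x ≤ 0) →
        qf A0 b0 0 xb ≤ qf A0 b0 0 x) ∧
      (∀ σ, (∀ j ∉ J, 0 ≤ σ j) → bvec b0 b σ ∈ Set.range (Amat A0 A σ).mulVec →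
        (Amat A0 A σ).PosSemidef → DL σ ≤ DL σb) ∧
      ((Amat A0 A σb).PosDef →
        ∀ x, ((∀ j ∈ J, qf (A j) (b j) (c j) x = 0) ∧
            ∀ j ∉ J, qf (A j) (b j) (c j) x ≤ 0) →
          x ≠ xb → qf A0 b0 0 xb < qf A0 b0 0 x)) :=
  statement7_general A0 A b0 b c J DL hDL xb σb hstat hJc hJ
end
end
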